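/- arXiv:1708.08295 — 5 statements merged into one kernel-verified Lean document; each statement's English description precedes it below -/
import Mathlib

section
/- Let f : (ℂ²,0) → (ℂ,0) be an analytic germ mini-regular in x of order m (i.e. ord f = m and the degree-m homogeneous part f_m satisfies f_m(1,0) ≠ 0). Let x = γ(y) be a Puiseux series with γ(0)=0 that is a root of ∂f/∂x = 0 but not of f = 0. Then ord_y f(γ(y),y) ≥ m and ℓ(γ) := ord_y (∂f/∂y)(γ(y),y) / ord_y f(γ(y),y) ≥ 1 - 1/m = (m-1)/m. -/
/-!
Put `g t = f (x t, t ^ N)`. Since `∂f/∂x` vanishes along the curve, the chain rule gives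
`g' t = N t ^ (N - 1) ∂f/∂y (x t, t ^ N)`, hence `ord g = N + ord ∂f/∂y (x t, t ^ N)`.
Mini-regularity forces `ord x ≥ N`: if `x = t ^ k u` with `k < N` and `u 0 ≠ 0`, then
`∂f/∂x (x t, t ^ N)` has the nonzero leading term `m p_m(1, 0) u(0) ^ (m - 1) t ^ (k (m - 1))`.
So the curve is `O(t ^ N)`, and `f = O(‖z‖ ^ m)` gives `ord g ≥ m N`; finally
`ord ∂f/∂y / ord g = 1 - N / ord g ≥ 1 - 1 / m`.
-/

open Filter Asymptotics Topology

section

variable {𝕜 E F : Type*} [NontriviallyNormedField 𝕜] [NormedAddCommGroup E] [NormedSpace 𝕜 E]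
  [NormedAddCommGroup F] [NormedSpace 𝕜 F]

namespace FormalMultilinearSeries

variable {p : FormalMultilinearSeries 𝕜 E F} {d : ℕ}

theorem partialSum_eq_zero_of_forall_lt (hp : ∀ j < d, p j = 0) (z : E) :
    p.partialSum d z = 0 :=
  Finset.sum_eq_zero fun j hj => by simp [hp j (Finset.mem_range.mp hj)]

theorem partialSum_succ_eq_of_forall_lt (hp : ∀ j < d, p j = 0) (z : E) :
    p.partialSum (d + 1) z = p d fun _ => z := by
  rw [partialSum, Finset.sum_range_succ, ← partialSum, partialSum_eq_zero_of_forall_lt hp,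
    zero_add]

variable (p) in
noncomputable def dirDerivSeries (v : E) : FormalMultilinearSeries 𝕜 E F :=
  (ContinuousLinearMap.apply 𝕜 F v).compFormalMultilinearSeries p.derivSeries

theorem dirDerivSeries_eq_zero {v : E} {n : ℕ} (hp : p (n + 1) = 0) :
    p.dirDerivSeries v n = 0 := by
  ext w; simp [dirDerivSeries, derivSeries_eq_zero _ hp]

theorem dirDerivSeries_apply_diag (v : E) (n : ℕ) :
    p.dirDerivSeries v n (fun _ => v) = (n + 1) • p (n + 1) fun _ => v := by
  simp [dirDerivSeries, derivSeries_apply_diag]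

end FormalMultilinearSeries

theorem HasFPowerSeriesAt.fderiv_apply [CompleteSpace F] {p : FormalMultilinearSeries 𝕜 E F}
    {f : E → F} {x : E} (hf : HasFPowerSeriesAt f p x) (v : E) :
    HasFPowerSeriesAt (fun z => fderiv 𝕜 f z v) (p.dirDerivSeries v) x :=
  let ⟨_, hr⟩ := hf
  ⟨_, (ContinuousLinearMap.apply 𝕜 F v).comp_hasFPowerSeriesOnBall hr.fderiv⟩

theorem le_of_isBigO_pow_smul {w : 𝕜 → E} (hw : ContinuousAt w 0) (hw0 : w 0 ≠ 0) {n q : ℕ}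
    (h : (fun t => t ^ n • w t) =O[𝓝 0] fun t => t ^ q) : q ≤ n := by
  by_contra! hnq
  have hsmall : w =O[𝓝[≠] 0] fun t => t ^ (q - n) := by
    have := (isBigO_refl (fun t : 𝕜 => (t ^ n)⁻¹) (𝓝[≠] 0)).smul (h.mono nhdsWithin_le_nhds)
    refine this.congr' ?_ ?_
    · filter_upwards [self_mem_nhdsWithin] with t (ht : t ≠ 0)
      simp [smul_smul, ht]
    · filter_upwards [self_mem_nhdsWithin] with t (ht : t ≠ 0)
      rw [smul_eq_mul, pow_sub₀ _ ht hnq.le, mul_comm]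
  have hlim : Tendsto w (𝓝[≠] 0) (𝓝 0) :=
    hsmall.trans_tendsto <| by
      simpa [zero_pow (Nat.sub_ne_zero_of_lt hnq)] using
        ((continuous_pow (q - n)).tendsto (0 : 𝕜)).mono_left nhdsWithin_le_nhds
  exact hw0 (tendsto_nhds_unique (hw.tendsto.mono_left nhdsWithin_le_nhds) hlim)

theorem natCast_le_analyticOrderAt_of_isBigO {g : 𝕜 → E} (hg : AnalyticAt 𝕜 g 0) {q : ℕ}
    (h : g =O[𝓝 0] fun t => t ^ q) : (q : ℕ∞) ≤ analyticOrderAt g 0 := by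
  cases hord : analyticOrderAt g 0 with
  | top => exact le_top
  | coe n =>
    obtain ⟨w, hw, hw0, hgw⟩ := hg.analyticOrderAt_eq_natCast.mp hord
    refine ENat.natCast_le_natCast.mpr
      (le_of_isBigO_pow_smul hw.continuousAt hw0 (h.congr' ?_ .rfl))
    filter_upwards [hgw] with t ht
    simpa using ht

theorem isBigO_pow_of_natCast_le_analyticOrderAt {g : 𝕜 → E} (hg : AnalyticAt 𝕜 g 0) {q : ℕ}
    (h : (q : ℕ∞) ≤ analyticOrderAt g 0) : g =O[𝓝 0] fun t => t ^ q := by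
  obtain ⟨w, hw, hgw⟩ := (natCast_le_analyticOrderAt hg).mp h
  have := (isBigO_refl (fun t : 𝕜 => t ^ q) (𝓝 0)).smul (hw.continuousAt.tendsto.isBigO_one 𝕜)
  refine this.congr' ?_ (.of_forall fun t => by simp)
  filter_upwards [hgw] with t ht
  simpa using ht.symm

namespace HasFPowerSeriesAt

variable {f : E → F} {p : FormalMultilinearSeries 𝕜 E F} {d : ℕ}

theorem isBigO_pow_of_forall_lt (hf : HasFPowerSeriesAt f p 0) (hp : ∀ j < d, p j = 0) :
    f =O[𝓝 0] fun z => ‖z‖ ^ d := by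
  simpa [p.partialSum_eq_zero_of_forall_lt hp] using hf.isBigO_sub_partialSum_pow d

theorem isBigO_sub_pow_of_forall_lt (hf : HasFPowerSeriesAt f p 0) (hp : ∀ j < d, p j = 0) :
    (fun z => f z - p d fun _ => z) =O[𝓝 0] fun z => ‖z‖ ^ (d + 1) := by
  simpa [p.partialSum_succ_eq_of_forall_lt hp] using hf.isBigO_sub_partialSum_pow (d + 1)

theorem natCast_mul_le_analyticOrderAt_comp (hf : HasFPowerSeriesAt f p 0)
    (hp : ∀ j < d, p j = 0) {γ : 𝕜 → E} {N : ℕ} (hN : N ≠ 0)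
    (hγ : γ =O[𝓝 0] fun t => t ^ N) (hfγ : AnalyticAt 𝕜 (f ∘ γ) 0) :
    ((d * N : ℕ) : ℕ∞) ≤ analyticOrderAt (f ∘ γ) 0 := by
  have hγ0 : Tendsto γ (𝓝 0) (𝓝 0) :=
    hγ.trans_tendsto <| by
      simpa [zero_pow hN] using (continuous_pow N).tendsto (0 : 𝕜)
  refine natCast_le_analyticOrderAt_of_isBigO hfγ ?_
  have := ((hf.isBigO_pow_of_forall_lt hp).comp_tendsto hγ0).trans (hγ.norm_left.pow d)
  simpa [← pow_mul, mul_comm N d] using this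

/-- Along `t ↦ t ^ k • w t`, `f` has the leading term `t ^ (k * d) • p d (w 0)`. -/
theorem not_eventually_comp_pow_smul_eq_zero (hf : HasFPowerSeriesAt f p 0)
    (hp : ∀ j < d, p j = 0) {w : 𝕜 → E} (hw : ContinuousAt w 0)
    (hwd : (p d fun _ => w 0) ≠ 0) {k : ℕ} (hk : k ≠ 0) :
    ¬ ∀ᶠ t in 𝓝 0, f (t ^ k • w t) = 0 := by
  intro hzero
  have harc : Tendsto (fun t => t ^ k • w t) (𝓝 0) (𝓝 0) := by
    have : ContinuousAt (fun t => t ^ k • w t) 0 := by fun_prop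
    simpa [zero_pow hk] using this.tendsto
  have hhom : ∀ t : 𝕜, (p d fun _ => t ^ k • w t) = t ^ (k * d) • p d fun _ => w t := by
    intro t
    simp [(p d).map_smul_univ, pow_mul]
  have hrem : (fun t => ‖t ^ k • w t‖ ^ (d + 1)) =O[𝓝 0] fun t => t ^ (k * d + k) := by
    have hwb : (fun t => ‖w t‖ ^ (d + 1)) =O[𝓝 0] fun _ => (1 : ℝ) :=
      (hw.norm.pow (d + 1)).tendsto.isBigO_one ℝ
    refine isBigO_norm_right.mp
      (((isBigO_refl (fun t : 𝕜 => ‖t‖ ^ (k * d + k)) _).mul hwb).congr' ?_ ?_)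
    · exact .of_forall fun t => by
        dsimp only; rw [norm_smul, mul_pow, norm_pow, ← pow_mul]; ring
    · exact .of_forall fun t => by simp
  have hlead : (fun t => t ^ (k * d) • p d fun _ => w t) =O[𝓝 0] fun t => t ^ (k * d + k) := by
    refine (((hf.isBigO_sub_pow_of_forall_lt hp).comp_tendsto harc).trans hrem).neg_left.congr' ?_
      .rfl
    filter_upwards [hzero] with t ht
    simp [ht, hhom]
  have hc : ContinuousAt (fun t => p d fun _ => w t) 0 := by fun_prop
  have := le_of_isBigO_pow_smul hc hwd hlead
  omega

end HasFPowerSeriesAt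

theorem analyticOrderAt_const_mul_pow_smul {c : 𝕜} (hc : c ≠ 0) {h : 𝕜 → E}
    (hh : AnalyticAt 𝕜 h 0) (n : ℕ) :
    analyticOrderAt (fun t => (c * t ^ n) • h t) 0 = n + analyticOrderAt h 0 := by
  have hmon : analyticOrderAt (fun t : 𝕜 => c * t ^ n) 0 = n :=
    (AnalyticAt.analyticOrderAt_eq_natCast (by fun_prop)).mpr
      ⟨fun _ => c, analyticAt_const, hc, .of_forall fun t => by simp [mul_comm]⟩
  rw [← hmon]
  exact analyticOrderAt_smul (f := fun t : 𝕜 => c * t ^ n) (by fun_prop) hh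

end

section Bivariate

variable {𝕜 F : Type*} [NontriviallyNormedField 𝕜] [NormedAddCommGroup F] [NormedSpace 𝕜 F]
  {f : 𝕜 × 𝕜 → F}

theorem deriv_comp_prodMk_left {a b : 𝕜} (hf : DifferentiableAt 𝕜 f (a, b)) :
    deriv (fun s => f (s, b)) a = fderiv 𝕜 f (a, b) (1, 0) :=
  (hf.hasFDerivAt.comp_hasDerivAt a ((hasDerivAt_id a).prodMk (hasDerivAt_const a b))).deriv

theorem deriv_comp_prodMk_right {a b : 𝕜} (hf : DifferentiableAt 𝕜 f (a, b)) :
    deriv (fun s => f (a, s)) b = fderiv 𝕜 f (a, b) (0, 1) :=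
  (hf.hasFDerivAt.comp_hasDerivAt b ((hasDerivAt_const b a).prodMk (hasDerivAt_id b))).deriv

theorem deriv_comp_prodMk_pow {x : 𝕜 → 𝕜} {t : 𝕜} {N : ℕ}
    (hf : DifferentiableAt 𝕜 f (x t, t ^ N)) (hx : DifferentiableAt 𝕜 x t) :
    deriv (fun s => f (x s, s ^ N)) t =
      deriv x t • deriv (fun s => f (s, t ^ N)) (x t) +
        (N * t ^ (N - 1)) • deriv (fun s => f (x t, s)) (t ^ N) := by
  rw [deriv_comp_prodMk_left hf, deriv_comp_prodMk_right hf, ← map_smul, ← map_smul, ← map_add]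
  have hγ := hx.hasDerivAt.prodMk (hasDerivAt_pow N t)
  exact (hf.hasFDerivAt.comp_hasDerivAt t hγ).deriv.trans (by simp)

theorem natCast_le_analyticOrderAt_of_fderiv_eq_zero [CompleteSpace F] [CharZero 𝕜]
    {p : FormalMultilinearSeries 𝕜 (𝕜 × 𝕜) F} (hf : HasFPowerSeriesAt f p 0) {m : ℕ}
    (hm : m ≠ 0) (hp : ∀ j < m, p j = 0) (hmini : (p m fun _ => ((1 : 𝕜), (0 : 𝕜))) ≠ 0)
    {x : 𝕜 → 𝕜} (hx : AnalyticAt 𝕜 x 0) (hx0 : x 0 = 0) {N : ℕ}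
    (hpolar : ∀ᶠ t in 𝓝 0, fderiv 𝕜 f (x t, t ^ N) (1, 0) = 0) :
    (N : ℕ∞) ≤ analyticOrderAt x 0 := by
  by_contra! hlt
  obtain ⟨k, hk⟩ := ENat.ne_top_iff_exists.mp hlt.ne_top
  have hkN : k < N := by exact_mod_cast hk ▸ hlt
  obtain ⟨u, hu, hu0, hxu⟩ := hx.analyticOrderAt_eq_natCast.mp hk.symm
  have hk0 : k ≠ 0 := by
    rintro rfl
    exact hu0 (by simpa [hx0] using hxu.self_of_nhds.symm)
  have hq : ∀ j < m - 1, p.dirDerivSeries (1, 0) j = 0 := fun j hj =>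
    FormalMultilinearSeries.dirDerivSeries_eq_zero (hp _ (by omega))
  have hlead : (p.dirDerivSeries (1, 0) (m - 1) fun _ => (u 0, 0)) ≠ 0 := by
    have : ((u 0, 0) : 𝕜 × 𝕜) = u 0 • (1, 0) := by simp
    rw [this, ContinuousMultilinearMap.map_smul_univ,
      FormalMultilinearSeries.dirDerivSeries_apply_diag, Nat.sub_add_cancel (by omega),
      ← Nat.cast_smul_eq_nsmul 𝕜]
    exact smul_ne_zero (Finset.prod_ne_zero_iff.mpr fun _ _ => hu0)
      (smul_ne_zero (by exact_mod_cast hm) hmini)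
  refine (hf.fderiv_apply (1, 0)).not_eventually_comp_pow_smul_eq_zero hq
    (w := fun t => (u t, t ^ (N - k))) (by fun_prop)
    (by simpa [zero_pow (Nat.sub_ne_zero_of_lt hkN)] using hlead) hk0 ?_
  filter_upwards [hpolar, hxu] with t h1 h2
  have harc : t ^ k • (u t, t ^ (N - k)) = (x t, t ^ N) := by
    ext <;> simp [h2, ← pow_add, Nat.add_sub_cancel' hkN.le]
  rwa [harc]

theorem analyticOrderAt_comp_prodMk_pow [CompleteSpace F] [CharZero 𝕜] {x : 𝕜 → 𝕜} {N : ℕ}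
    (hN : N ≠ 0) (hf : ∀ᶠ t in 𝓝 0, DifferentiableAt 𝕜 f (x t, t ^ N))
    (hx : ∀ᶠ t in 𝓝 0, DifferentiableAt 𝕜 x t)
    (hpolar : ∀ᶠ t in 𝓝 0, deriv (fun s => f (s, t ^ N)) (x t) = 0)
    (hg : AnalyticAt 𝕜 (fun t => f (x t, t ^ N)) 0) (hg0 : f (x 0, 0 ^ N) = 0)
    (hgy : AnalyticAt 𝕜 (fun t => deriv (fun s => f (x t, s)) (t ^ N)) 0) :
    analyticOrderAt (fun t => f (x t, t ^ N)) 0 =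
      N + analyticOrderAt (fun t => deriv (fun s => f (x t, s)) (t ^ N)) 0 := by
  have hderiv : deriv (fun t => f (x t, t ^ N)) =ᶠ[𝓝 0]
      fun t => ((N : 𝕜) * t ^ (N - 1)) • deriv (fun s => f (x t, s)) (t ^ N) := by
    filter_upwards [hf, hx, hpolar] with t h1 h2 h3
    rw [deriv_comp_prodMk_pow h1 h2, h3, smul_zero, zero_add]
  have h := hg.analyticOrderAt_deriv_add_one
  rw [analyticOrderAt_congr hderiv, analyticOrderAt_const_mul_pow_smul (by simpa) hgy] at h
  simp only [hg0, sub_zero] at h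
  rw [← h, add_right_comm, ← Nat.cast_add_one, Nat.sub_add_cancel (Nat.one_le_iff_ne_zero.mpr hN)]

end Bivariate

-- The Puiseux series `γ` is the arc `t ↦ (x t, t ^ N)`, so `ord_y = ord_t / N`.
theorem stmt4_general (f : ℂ × ℂ → ℂ) (p : FormalMultilinearSeries ℂ (ℂ × ℂ) ℂ)
    (hp : HasFPowerSeriesAt f p 0) (m : ℕ) (hm : 1 ≤ m)
    (hord : p.order = m) (hmini : (p m) (fun _ => ((1 : ℂ), (0 : ℂ))) ≠ 0)
    (N : ℕ) (hN : 1 ≤ N) (x : ℂ → ℂ) (hx : AnalyticAt ℂ x 0) (hx0 : x 0 = 0)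
    (hpolar : ∀ᶠ t in nhds (0 : ℂ), deriv (fun s => f (s, t ^ N)) (x t) = 0)
    (hg : AnalyticAt ℂ (fun t => f (x t, t ^ N)) 0)
    (hgy : AnalyticAt ℂ (fun t => deriv (fun s => f (x t, s)) (t ^ N)) 0)
    (og ogy : ℕ) (hog : analyticOrderAt (fun t => f (x t, t ^ N)) 0 = (og : ℕ∞)) (hogy : analyticOrderAt (fun t => deriv (fun s => f (x t, s)) (t ^ N)) 0 = (ogy : ℕ∞)) :
    m * N ≤ og ∧ ((m : ℝ) - 1) / m ≤ (ogy : ℝ) / og := by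
  have harc : Tendsto (fun t => (x t, t ^ N)) (𝓝 0) (𝓝 0) := by
    have : ContinuousAt (fun t => (x t, t ^ N)) 0 := by fun_prop
    simpa [hx0, zero_pow (by omega : N ≠ 0), Prod.mk_zero_zero] using this.tendsto
  have hdiff : ∀ᶠ t in 𝓝 0, DifferentiableAt ℂ f (x t, t ^ N) :=
    harc.eventually (hp.analyticAt.eventually_analyticAt.mono fun _ h => h.differentiableAt)
  have hp0 : ∀ j < m, p j = 0 := fun j hj => p.apply_eq_zero_of_lt_order (hord ▸ hj)
  have hxN : (N : ℕ∞) ≤ analyticOrderAt x 0 := by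
    refine natCast_le_analyticOrderAt_of_fderiv_eq_zero hp (by omega) hp0 hmini hx hx0 ?_
    filter_upwards [hdiff, hpolar] with t h1 h2
    rwa [← deriv_comp_prodMk_left h1]
  have hmN : m * N ≤ og := by
    have := hp.natCast_mul_le_analyticOrderAt_comp hp0 (by omega)
      ((isBigO_pow_of_natCast_le_analyticOrderAt hx hxN).prod_left (isBigO_refl _ _)) hg
    exact_mod_cast hog ▸ this
  have hog1 : 1 ≤ og := by nlinarith
  have hg0 : f (x 0, 0 ^ N) = 0 :=
    apply_eq_zero_of_analyticOrderAt_ne_zero (f := fun t => f (x t, t ^ N))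
      (by rw [hog]; exact_mod_cast (by omega : og ≠ 0))
  have hog' : og = N + ogy := by
    have := analyticOrderAt_comp_prodMk_pow (by omega) hdiff
      (hx.eventually_analyticAt.mono fun _ h => h.differentiableAt) hpolar hg hg0 hgy
    rw [hog, hogy] at this
    exact_mod_cast this
  refine ⟨hmN, ?_⟩
  have hmR : (1 : ℝ) ≤ m := by exact_mod_cast hm
  have hmNR : (m * N : ℝ) ≤ og := by exact_mod_cast hmN
  have hogR : (og : ℝ) = N + ogy := by exact_mod_cast hog'
  rw [div_le_div_iff₀ (by positivity) (by exact_mod_cast hog1), hogR]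
  nlinarith

/-- for `f` mini-regular in `x` of order `m` and a Puiseux series `γ`
(encoded by the arc `t ↦ (x t, t^N)`, so `ord_y = ord_t / N`) which is a root of
`∂f/∂x = 0` but not of `f = 0`, one has `ord_y f(γ(y),y) ≥ m` and
`ℓ(γ) = ord_y (∂f/∂y)(γ(y),y) / ord_y f(γ(y),y) ≥ (m-1)/m`. -/
theorem stmt4 (f : ℂ × ℂ → ℂ) (p : FormalMultilinearSeries ℂ (ℂ × ℂ) ℂ)
    (hp : HasFPowerSeriesAt f p 0) (m : ℕ) (hm : 1 ≤ m)
    (hord : p.order = m) (hmini : (p m) (fun _ => ((1 : ℂ), (0 : ℂ))) ≠ 0)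
    (N : ℕ) (hN : 1 ≤ N) (x : ℂ → ℂ) (hx : AnalyticAt ℂ x 0) (hx0 : x 0 = 0)
    (hpolar : ∀ᶠ t in nhds (0 : ℂ), deriv (fun s => f (s, t ^ N)) (x t) = 0)
    (hg : AnalyticAt ℂ (fun t => f (x t, t ^ N)) 0)
    (hgne : ¬ (∀ᶠ t in nhds (0 : ℂ), f (x t, t ^ N) = 0))
    (hgy : AnalyticAt ℂ (fun t => deriv (fun s => f (x t, s)) (t ^ N)) 0)
    (og ogy : ℕ) (hog : analyticOrderAt (fun t => f (x t, t ^ N)) 0 = (og : ℕ∞)) (hogy : analyticOrderAt (fun t => deriv (fun s => f (x t, s)) (t ^ N)) 0 = (ogy : ℕ∞)) :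
    m * N ≤ og ∧ ((m : ℝ) - 1) / m ≤ (ogy : ℝ) / og :=
  stmt4_general f p hp m hm hord hmini N hN x hx hx0 hpolar hg hgy og ogy hog hogy
end

section
/- Let ξ_1, ξ_2, ξ_k be Puiseux series with ξ_1 ≠ ξ_2, let ρ = ord(ξ_1 - ξ_2), and let ξ_{1,2}(y) = Σ_{α < ρ} a_α y^α + g y^ρ be the ρ-approximation of ξ_1 (where Σ_{α<ρ} a_α y^α is the truncation of ξ_1 below order ρ and g is a constant avoiding finitely many values). Then ord(ξ_{1,2} - ξ_k) = min{ord(ξ_1 - ξ_k), ord(ξ_2 - ξ_k)}. -/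
lemma orderTop_eq_of_coeff (x : HahnSeries ℚ ℂ) (r : ℚ) (h0 : x.coeff r ≠ 0)
    (h1 : ∀ s, s < r → x.coeff s = 0) : x.orderTop = (r : WithTop ℚ) := by
  apply HahnSeries.orderTop_eq_of_le h0
  intro g' hg'
  by_contra hlt
  exact hg' (h1 g' (not_le.mp hlt))

/-- the `ρ`-approximation `ξ_{1,2}` of two distinct Puiseux series `ξ₁, ξ₂`
with contact order `ρ = ord(ξ₁ - ξ₂)` (generic coefficient `g` at `y^ρ`) satisfies
`ord(ξ_{1,2} - ξ_k) = min{ord(ξ₁ - ξ_k), ord(ξ₂ - ξ_k)}`. Puiseux series are modelled as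
Hahn series over `ℚ` and `ord` as `orderTop` (so `ord 0 = ⊤`). -/
theorem stmt9 (ξ₁ ξ₂ ξk : HahnSeries ℚ ℂ) (hne : ξ₁ ≠ ξ₂) (ρ : ℚ)
    (hρ : (ξ₁ - ξ₂).orderTop = (ρ : WithTop ℚ)) (g : ℂ)
    (hg1 : g ≠ ξ₁.coeff ρ) (hg2 : g ≠ ξ₂.coeff ρ) (hgk : g ≠ ξk.coeff ρ)
    (τ : HahnSeries ℚ ℂ)
    (hτ : ∀ α : ℚ, τ.coeff α =
      if α < ρ then ξ₁.coeff α else if α = ρ then g else 0) :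
    (τ - ξk).orderTop = min ((ξ₁ - ξk).orderTop) ((ξ₂ - ξk).orderTop) := by
  -- ξ₁ and ξ₂ agree below ρ
  have hlt : ∀ α, α < ρ → ξ₁.coeff α = ξ₂.coeff α := by
    intro α hα
    have : (ξ₁ - ξ₂).coeff α = 0 :=
      HahnSeries.coeff_eq_zero_of_lt_orderTop (by rw [hρ]; exact_mod_cast hα)
    rw [HahnSeries.coeff_sub] at this
    exact sub_eq_zero.mp this
  have hρne : ξ₁.coeff ρ ≠ ξ₂.coeff ρ := by
    have := HahnSeries.coeff_orderTop_ne hρ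
    rw [HahnSeries.coeff_sub] at this
    exact sub_ne_zero.mp this
  -- τ agrees with ξ₁ below ρ
  have hτlt : ∀ α, α < ρ → (τ - ξk).coeff α = (ξ₁ - ξk).coeff α := by
    intro α hα
    simp [HahnSeries.coeff_sub, hτ α, hα]
  have hτρ : (τ - ξk).coeff ρ = g - ξk.coeff ρ := by
    simp [HahnSeries.coeff_sub, hτ ρ]
  set o1 := (ξ₁ - ξk).orderTop with ho1
  set o2 := (ξ₂ - ξk).orderTop with ho2
  by_cases h : min o1 o2 < (ρ : WithTop ℚ)
  · -- the minimum is below ρ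
    obtain ⟨m, hm⟩ : ∃ m : ℚ, min o1 o2 = (m : WithTop ℚ) := by
      rcases WithTop.ne_top_iff_exists.mp (ne_top_of_lt h) with ⟨m, hm⟩
      exact ⟨m, hm.symm⟩
    have hmρ : m < ρ := by rwa [hm, WithTop.coe_lt_coe] at h
    -- the two coefficients at m agree
    have hcoeq : (ξ₁ - ξk).coeff m = (ξ₂ - ξk).coeff m := by
      simp [HahnSeries.coeff_sub, hlt m hmρ]
    have hne0 : (ξ₁ - ξk).coeff m ≠ 0 := by
      rcases min_cases o1 o2 with ⟨he, _⟩ | ⟨he, _⟩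
      · exact HahnSeries.coeff_orderTop_ne (he.symm.trans hm)
      · rw [hcoeq]
        exact HahnSeries.coeff_orderTop_ne (he.symm.trans hm)
    rw [hm]
    apply orderTop_eq_of_coeff
    · rw [hτlt m hmρ]; exact hne0
    · intro s hs
      rw [hτlt s (hs.trans hmρ)]
      apply HahnSeries.coeff_eq_zero_of_lt_orderTop
      calc (s : WithTop ℚ) < (m : WithTop ℚ) := by exact_mod_cast hs
        _ = min o1 o2 := hm.symm
        _ ≤ o1 := min_le_left _ _
  · -- the minimum is ≥ ρ; show both sides equal ρ
    push_neg at h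
    have hτord : (τ - ξk).orderTop = (ρ : WithTop ℚ) := by
      apply orderTop_eq_of_coeff
      · rw [hτρ]; exact sub_ne_zero.mpr hgk
      · intro s hs
        rw [hτlt s hs]
        apply HahnSeries.coeff_eq_zero_of_lt_orderTop
        calc (s : WithTop ℚ) < (ρ : WithTop ℚ) := by exact_mod_cast hs
          _ ≤ min o1 o2 := h
          _ ≤ o1 := min_le_left _ _
    rw [hτord]
    refine le_antisymm h (le_of_not_gt fun hlt' => ?_)
    have h1 : (ξ₁ - ξk).coeff ρ = 0 :=
      HahnSeries.coeff_eq_zero_of_lt_orderTop (lt_of_lt_of_le hlt' (min_le_left _ _))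
    have h2 : (ξ₂ - ξk).coeff ρ = 0 :=
      HahnSeries.coeff_eq_zero_of_lt_orderTop (lt_of_lt_of_le hlt' (min_le_right _ _))
    rw [HahnSeries.coeff_sub, sub_eq_zero] at h1 h2
    exact hρne (h1.trans h2.symm)
end

section
/- Let f : ℂ² → ℂ be a nonzero homogeneous polynomial of degree d ≥ 1. Then the Łojasiewicz gradient exponent of f at the origin equals 1 - 1/d. -/
/-!
For `f` homogeneous of degree `d`, write `z = s • w` with `w = e_j + t • e_k` and `‖t‖ ≤ 1`. Then
`f z = s ^ d * g t` and `‖Df z‖ = ‖s‖ ^ (d - 1) * ‖Df w‖`, where `g t = f w` is a polynomial of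
degree `≤ d`. Both `g' t = Df w e_k` and, by Euler's identity, `d * g t = Df w w` are bounded by a
multiple of `‖Df w‖`, so it suffices that `‖g‖ ^ (1 - 1/d) ≲ ‖g'‖ + ‖g‖` on the unit disc. Near a
root of multiplicity `m ≤ d`, writing `g = (X - r) ^ m * h` gives `‖g‖ ^ (1 - 1/m) ≲ ‖g'‖`, and
compactness does the rest. Hence every exponent above `1 - 1/d` is admissible. Along a ray `τ • x`
with `f x ≠ 0`, `‖f‖ ∼ τ ^ d` while `‖Df‖ ∼ τ ^ (d - 1)`, so no exponent below it is.
-/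

noncomputable def LGE {𝕜 : Type*} [RCLike 𝕜] {E : Type*} [NormedAddCommGroup E]
    [NormedSpace 𝕜 E] (f : E → 𝕜) : ℝ :=
  sInf {l : ℝ | 0 < l ∧ ∃ c > (0:ℝ), ∃ ε > (0:ℝ), ∀ z : E, ‖z‖ < ε →
    c * ‖f z‖ ^ l ≤ ‖fderiv 𝕜 f z‖}

open Filter Topology Polynomial

theorem Real.pow_rpow_one_sub_one_div {x : ℝ} (hx : 0 ≤ x) {n : ℕ} (hn : 1 ≤ n) :
    (x ^ n) ^ (1 - 1 / (n : ℝ)) = x ^ (n - 1) := by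
  rw [← Real.rpow_natCast, ← Real.rpow_mul hx, ← Real.rpow_natCast, Nat.cast_sub hn,
    Nat.cast_one, mul_sub, mul_one, mul_one_div_cancel (by positivity)]

theorem exists_pos_eventually_mul_le {X : Type*} [TopologicalSpace X] {a b : X → ℝ} {x : X}
    (ha : ContinuousAt a x) (hb : ContinuousAt b x) (hbx : 0 < b x) :
    ∃ c > 0, ∀ᶠ y in 𝓝 x, c * a y ≤ b y := by
  have hA : 0 < |a x| + 1 := by positivity
  refine ⟨b x / 2 / (|a x| + 1), by positivity, ?_⟩
  filter_upwards [ha.eventually_lt continuousAt_const (lt_of_le_of_lt (le_abs_self (a x))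
    (lt_add_one _)), hb.eventually_const_lt (half_lt_self hbx)] with y hay hby
  calc b x / 2 / (|a x| + 1) * a y ≤ b x / 2 / (|a x| + 1) * (|a x| + 1) := by gcongr
    _ = b x / 2 := div_mul_cancel₀ _ hA.ne'
    _ ≤ b y := hby.le

theorem IsCompact.exists_pos_forall_mul_le {X : Type*} [TopologicalSpace X] {K : Set X}
    (hK : IsCompact K) {a b : X → ℝ} (ha : ∀ x, 0 ≤ a x)
    (hloc : ∀ x ∈ K, ∃ c > 0, ∀ᶠ y in 𝓝 x, c * a y ≤ b y) :
    ∃ c > 0, ∀ y ∈ K, c * a y ≤ b y := by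
  refine hK.induction_on (p := fun U => ∃ c > 0, ∀ y ∈ U, c * a y ≤ b y) ⟨1, one_pos, by simp⟩
    (fun U V hUV ⟨c, hc, hV⟩ => ⟨c, hc, fun y hy => hV y (hUV hy)⟩)
    (fun U V ⟨c, hc, hU⟩ ⟨c', hc', hV⟩ => ⟨min c c', lt_min hc hc', ?_⟩) fun x hx => ?_
  · rintro y (hy | hy)
    · exact (mul_le_mul_of_nonneg_right (min_le_left c c') (ha y)).trans (hU y hy)
    · exact (mul_le_mul_of_nonneg_right (min_le_right c c') (ha y)).trans (hV y hy)
  · obtain ⟨c, hc, hev⟩ := hloc x hx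
    exact ⟨_, mem_nhdsWithin_of_mem_nhds hev, c, hc, fun y hy => hy⟩

namespace Polynomial

variable {𝕜 : Type*} [NormedField 𝕜] [CharZero 𝕜]

theorem exists_pos_eventually_mul_rpow_le_norm_derivative {g : 𝕜[X]} (hg : g ≠ 0) {r : 𝕜}
    (hr : g.IsRoot r) : ∃ c > 0, ∀ᶠ t in 𝓝 r,
      c * ‖g.eval t‖ ^ (1 - 1 / (g.rootMultiplicity r : ℝ)) ≤ ‖g.derivative.eval t‖ := by
  have hg' : derivative g ≠ 0 :=
    derivative_ne_zero.2 (natDegree_pos_iff_degree_pos.2 (degree_pos_of_root hg hr)).ne'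
  obtain ⟨h, hgh, hh⟩ := g.exists_eq_pow_rootMultiplicity_mul_and_not_dvd hg r
  obtain ⟨u, hgu, hu⟩ := g.derivative.exists_eq_pow_rootMultiplicity_mul_and_not_dvd hg' r
  rw [derivative_rootMultiplicity_of_root hr] at hgu
  rw [dvd_iff_isRoot, IsRoot.def] at hh hu
  set m := g.rootMultiplicity r
  have hm : 1 ≤ m := (rootMultiplicity_pos hg).2 hr
  obtain ⟨c, hc, hev⟩ := exists_pos_eventually_mul_le
    (a := fun t => ‖h.eval t‖ ^ (1 - 1 / (m : ℝ)))
    (h.continuous.norm.continuousAt.rpow_const (Or.inl (norm_ne_zero_iff.2 hh)))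
    u.continuous.norm.continuousAt (norm_pos_iff.2 hu)
  refine ⟨c, hc, hev.mono fun t ht => ?_⟩
  have hgt : ‖g.eval t‖ = ‖t - r‖ ^ m * ‖h.eval t‖ := by
    rw [hgh]; simp
  have hg't : ‖g.derivative.eval t‖ = ‖t - r‖ ^ (m - 1) * ‖u.eval t‖ := by
    rw [hgu]; simp
  rw [hgt, hg't, Real.mul_rpow (by positivity) (norm_nonneg _), Real.pow_rpow_one_sub_one_div
    (norm_nonneg _) hm, mul_left_comm]
  exact mul_le_mul_of_nonneg_left ht (by positivity)

theorem exists_pos_forall_mul_rpow_le_of_isCompact {g : 𝕜[X]} (hg : g ≠ 0) {d : ℕ}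
    (hgd : g.natDegree ≤ d) {K : Set 𝕜} (hK : IsCompact K) : ∃ c > 0, ∀ t ∈ K,
      c * ‖g.eval t‖ ^ (1 - 1 / (d : ℝ)) ≤ ‖g.derivative.eval t‖ + ‖g.eval t‖ := by
  refine hK.exists_pos_forall_mul_le (fun t => by positivity) fun t₀ _ => ?_
  by_cases ht₀ : g.IsRoot t₀
  · obtain ⟨c, hc, hev⟩ := exists_pos_eventually_mul_rpow_le_norm_derivative hg ht₀
    have hm : 1 ≤ g.rootMultiplicity t₀ := (rootMultiplicity_pos hg).2 ht₀
    have hmd : (g.rootMultiplicity t₀ : ℝ) ≤ d := by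
      classical
      exact_mod_cast count_roots g ▸ ((Multiset.count_le_card _ _).trans (card_roots' g)).trans hgd
    have hsmall : ∀ᶠ t in 𝓝 t₀, ‖g.eval t‖ ≤ 1 :=
      (g.continuous.norm.tendsto t₀).eventually_le_const (by simp [ht₀.eq_zero])
    refine ⟨c, hc, (hev.and hsmall).mono fun t ⟨ht, ht1⟩ => ?_⟩
    calc c * ‖g.eval t‖ ^ (1 - 1 / (d : ℝ))
        ≤ c * ‖g.eval t‖ ^ (1 - 1 / (g.rootMultiplicity t₀ : ℝ)) := by
          refine mul_le_mul_of_nonneg_left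
            (Real.rpow_le_rpow_of_exponent_ge' (norm_nonneg _) ht1 ?_ ?_) hc.le
          · exact sub_nonneg.2 ((div_le_one (by positivity)).2 (by exact_mod_cast hm))
          · exact sub_le_sub_left (one_div_le_one_div_of_le (by positivity) hmd) 1
      _ ≤ ‖g.derivative.eval t‖ := ht
      _ ≤ ‖g.derivative.eval t‖ + ‖g.eval t‖ := le_add_of_nonneg_right (norm_nonneg _)
  · exact exists_pos_eventually_mul_le
      (g.continuous.norm.continuousAt.rpow_const (Or.inl (norm_ne_zero_iff.2 ht₀)))
      (g.derivative.continuous.norm.add g.continuous.norm).continuousAt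
      (add_pos_of_nonneg_of_pos (norm_nonneg _) (norm_pos_iff.2 ht₀))

end Polynomial

theorem fin_two_eq_smul_single_add_smul_single {K : Type*} [Field K] (x : Fin 2 → K) {j k : Fin 2}
    (hjk : j ≠ k) (hx : x j ≠ 0) :
    x = x j • (Pi.single j 1 + (x k / x j) • Pi.single k 1) := by
  funext i
  obtain rfl | rfl : i = j ∨ i = k := by omega
  · simp [hjk]
  · simp [hjk.symm, mul_div_cancel₀ _ hx]

namespace MvPolynomial

variable {R σ : Type*} [CommSemiring R]

theorem IsHomogeneous.eval_smul {f : MvPolynomial σ R} {d : ℕ}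
    (hf : f.IsHomogeneous d) (s : R) (x : σ → R) : eval (s • x) f = s ^ d * eval x f := by
  rw [eval_eq, eval_eq, Finset.mul_sum]
  refine Finset.sum_congr rfl fun m hm => ?_
  have hdeg : ∑ i ∈ m.support, m i = d := by
    simpa [Finsupp.weight_apply, Finsupp.sum] using hf (mem_support_iff.mp hm)
  simp only [Pi.smul_apply, smul_eq_mul, mul_pow, Finset.prod_mul_distrib,
    Finset.prod_pow_eq_pow_sum, hdeg]
  ring

theorem natDegree_aeval_le_totalDegree (f : MvPolynomial σ R) {g : σ → Polynomial R}
    (hg : ∀ i, (g i).natDegree ≤ 1) : (aeval g f).natDegree ≤ f.totalDegree := by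
  rw [aeval_def, eval₂_eq]
  refine Polynomial.natDegree_sum_le_of_forall_le _ _ fun m hm => ?_
  refine (Polynomial.natDegree_C_mul_le _ _).trans <| (Polynomial.natDegree_prod_le _ _).trans <|
    le_trans ?_ (le_totalDegree hm)
  refine Finset.sum_le_sum fun i _ => Polynomial.natDegree_pow_le.trans ?_
  simpa using Nat.mul_le_mul_left (m i) (hg i)

noncomputable def restrictLine (f : MvPolynomial σ R) (a b : σ → R) : Polynomial R :=
  aeval (fun i => Polynomial.C (b i) * Polynomial.X + Polynomial.C (a i)) f

theorem eval_restrictLine (f : MvPolynomial σ R) (a b : σ → R) (t : R) :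
    (f.restrictLine a b).eval t = eval (a + t • b) f := by
  rw [restrictLine, ← Polynomial.coe_aeval_eq_eval, comp_aeval_apply, aeval_eq_eval]
  congr 2
  funext i
  simp only [map_add, map_mul, Polynomial.aeval_C, Polynomial.aeval_X, Algebra.algebraMap_self,
    RingHom.id_apply, Pi.add_apply, Pi.smul_apply, smul_eq_mul]
  ring

theorem natDegree_restrictLine_le (f : MvPolynomial σ R) (a b : σ → R) :
    (f.restrictLine a b).natDegree ≤ f.totalDegree :=
  f.natDegree_aeval_le_totalDegree fun _ => Polynomial.natDegree_linear_le

variable {K : Type*} [Field K] {f : MvPolynomial (Fin 2) K} {d : ℕ}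

theorem IsHomogeneous.eval_eq_pow_mul_eval_restrictLine (hf : f.IsHomogeneous d) {j k : Fin 2}
    (hjk : j ≠ k) {x : Fin 2 → K} (hx : x j ≠ 0) :
    eval x f = x j ^ d * (f.restrictLine (Pi.single j 1) (Pi.single k 1)).eval (x k / x j) := by
  rw [eval_restrictLine, ← hf.eval_smul, ← fin_two_eq_smul_single_add_smul_single x hjk hx]

theorem IsHomogeneous.restrictLine_ne_zero [Infinite K] (hf : f.IsHomogeneous d) (hf0 : f ≠ 0)
    {j k : Fin 2} (hjk : j ≠ k) : f.restrictLine (Pi.single j 1) (Pi.single k 1) ≠ 0 := by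
  intro h0
  have hXf : X j * f = 0 := MvPolynomial.funext fun x => by
    rcases eq_or_ne (x j) 0 with hx | hx
    · simp [hx]
    · simp [hf.eval_eq_pow_mul_eval_restrictLine hjk hx, h0]
  exact hf0 ((mul_eq_zero.1 hXf).resolve_left (X_ne_zero j))

end MvPolynomial

section Homogeneous

variable {𝕜 E : Type*} [NontriviallyNormedField 𝕜] [NormedAddCommGroup E] [NormedSpace 𝕜 E]

def IsHomogeneousFun (F : E → 𝕜) (d : ℕ) : Prop :=
  ∀ (s : 𝕜) (z : E), F (s • z) = s ^ d * F z

variable {F : E → 𝕜} {d : ℕ}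

theorem IsHomogeneousFun.map_zero (hF : IsHomogeneousFun F d) (hd : 1 ≤ d) : F 0 = 0 := by
  simpa [zero_pow (Nat.one_le_iff_ne_zero.1 hd)] using hF 0 0

theorem IsHomogeneousFun.smul_fderiv_smul (hF : IsHomogeneousFun F d) {z : E}
    (hz : DifferentiableAt 𝕜 F z) (s : 𝕜) :
    s • fderiv 𝕜 F (s • z) = s ^ d • fderiv 𝕜 F z := by
  rw [← fderiv_comp_smul, ← fderiv_const_mul hz]
  exact congrArg (fderiv 𝕜 · z) (funext (hF s))

theorem IsHomogeneousFun.norm_fderiv_smul (hF : IsHomogeneousFun F d) (hd : 1 ≤ d) {z : E}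
    (hz : DifferentiableAt 𝕜 F z) {s : 𝕜} (hs : s ≠ 0) :
    ‖fderiv 𝕜 F (s • z)‖ = ‖s‖ ^ (d - 1) * ‖fderiv 𝕜 F z‖ := by
  have h := congrArg norm (hF.smul_fderiv_smul hz s)
  rw [norm_smul, norm_smul, norm_pow, ← Nat.sub_add_cancel hd, pow_succ', mul_assoc] at h
  exact mul_left_cancel₀ (norm_ne_zero_iff.2 hs) h

theorem IsHomogeneousFun.fderiv_apply_self (hF : IsHomogeneousFun F d) {z : E}
    (hz : DifferentiableAt 𝕜 F z) : fderiv 𝕜 F z z = d * F z := by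
  have hline : HasDerivAt (fun s : 𝕜 => F (s • z)) (fderiv 𝕜 F z z) 1 := by
    have hz' : HasFDerivAt F (fderiv 𝕜 F z) ((1 : 𝕜) • z) := by
      rw [one_smul]; exact hz.hasFDerivAt
    have := hz'.comp_hasDerivAt (1 : 𝕜) ((hasDerivAt_id' (1 : 𝕜)).smul_const z)
    rwa [one_smul] at this
  have hpow : HasDerivAt (fun s : 𝕜 => F (s • z)) (d * F z) 1 := by
    rw [funext fun s => hF s z]
    simpa using (hasDerivAt_pow d (1 : 𝕜)).mul_const (F z)
  exact hline.unique hpow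

end Homogeneous

section RCLike

variable {𝕜 E : Type*} [RCLike 𝕜] [NormedAddCommGroup E] [NormedSpace 𝕜 E] {F : E → 𝕜} {d : ℕ}

theorem IsHomogeneousFun.norm_le_norm_mul_norm_fderiv (hF : IsHomogeneousFun F d) (hd : 1 ≤ d)
    {z : E} (hz : DifferentiableAt 𝕜 F z) : ‖F z‖ ≤ ‖z‖ * ‖fderiv 𝕜 F z‖ :=
  calc ‖F z‖ ≤ d * ‖F z‖ := le_mul_of_one_le_left (norm_nonneg _) (by exact_mod_cast hd)
    _ = ‖fderiv 𝕜 F z z‖ := by rw [hF.fderiv_apply_self hz, norm_mul, RCLike.norm_natCast]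
    _ ≤ ‖fderiv 𝕜 F z‖ * ‖z‖ := (fderiv 𝕜 F z).le_opNorm z
    _ = ‖z‖ * ‖fderiv 𝕜 F z‖ := mul_comm _ _

theorem IsHomogeneousFun.exists_pos_mul_rpow_le_norm_fderiv_smul (hF : IsHomogeneousFun F d)
    (hdiff : Differentiable 𝕜 F) (hd : 1 ≤ d) {a b : E} {g : 𝕜[X]} (hg : g ≠ 0)
    (hgd : g.natDegree ≤ d) (hgF : ∀ t, g.eval t = F (a + t • b)) :
    ∃ c > 0, ∀ s t : 𝕜, s ≠ 0 → ‖t‖ ≤ 1 →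
      c * ‖F (s • (a + t • b))‖ ^ (1 - 1 / (d : ℝ)) ≤ ‖fderiv 𝕜 F (s • (a + t • b))‖ := by
  obtain ⟨c, hc, hcg⟩ :=
    g.exists_pos_forall_mul_rpow_le_of_isCompact hg hgd (isCompact_closedBall (0 : 𝕜) 1)
  set C := ‖a‖ + 2 * ‖b‖ + 1
  refine ⟨c / C, by positivity, fun s t hs ht => ?_⟩
  set w := a + t • b
  have hw : ‖w‖ ≤ ‖a‖ + ‖b‖ :=
    calc ‖w‖ ≤ ‖a‖ + ‖t‖ * ‖b‖ := (norm_add_le _ _).trans_eq (by rw [norm_smul])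
      _ ≤ ‖a‖ + ‖b‖ := by gcongr; exact mul_le_of_le_one_left (norm_nonneg _) ht
  have hderiv : g.derivative.eval t = fderiv 𝕜 F w b := by
    have hline : HasDerivAt (fun t : 𝕜 => F (a + t • b)) (fderiv 𝕜 F w b) t := by
      have := (hdiff w).hasFDerivAt.comp_hasDerivAt t
        (((hasDerivAt_id' t).smul_const b).const_add a)
      rwa [one_smul] at this
    exact (g.hasDerivAt t).unique (by simpa only [hgF] using hline)
  have hgw : c * ‖g.eval t‖ ^ (1 - 1 / (d : ℝ)) ≤ C * ‖fderiv 𝕜 F w‖ :=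
    calc c * ‖g.eval t‖ ^ (1 - 1 / (d : ℝ)) ≤ ‖g.derivative.eval t‖ + ‖g.eval t‖ :=
          hcg t (mem_closedBall_zero_iff.2 ht)
      _ ≤ ‖fderiv 𝕜 F w‖ * ‖b‖ + ‖w‖ * ‖fderiv 𝕜 F w‖ := by
          rw [hderiv, hgF]
          exact add_le_add ((fderiv 𝕜 F w).le_opNorm b)
            (hF.norm_le_norm_mul_norm_fderiv hd (hdiff w))
      _ ≤ C * ‖fderiv 𝕜 F w‖ := by
          nlinarith [norm_nonneg (fderiv 𝕜 F w), norm_nonneg b]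
  rw [hF, hF.norm_fderiv_smul hd (hdiff w) hs, norm_mul, norm_pow,
    Real.mul_rpow (by positivity) (norm_nonneg _), Real.pow_rpow_one_sub_one_div (norm_nonneg _) hd,
    ← hgF]
  calc c / C * (‖s‖ ^ (d - 1) * ‖g.eval t‖ ^ (1 - 1 / (d : ℝ)))
      = ‖s‖ ^ (d - 1) * (c * ‖g.eval t‖ ^ (1 - 1 / (d : ℝ)) / C) := by ring
    _ ≤ ‖s‖ ^ (d - 1) * ‖fderiv 𝕜 F w‖ := by
        gcongr
        rw [div_le_iff₀ (by positivity)]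
        linarith

/-- `LGE F` is by definition `sInf {l | LojasiewiczIneq F l}`. -/
def LojasiewiczIneq (F : E → 𝕜) (l : ℝ) : Prop :=
  0 < l ∧ ∃ c > (0 : ℝ), ∃ ε > (0 : ℝ), ∀ z : E, ‖z‖ < ε → c * ‖F z‖ ^ l ≤ ‖fderiv 𝕜 F z‖

theorem LGE_eq_of_forall {e : ℝ} (hup : ∀ l, e < l → LojasiewiczIneq F l)
    (hlow : ∀ l, LojasiewiczIneq F l → e ≤ l) : LGE F = e :=
  le_antisymm (le_of_forall_gt_imp_ge_of_dense fun _ hl => csInf_le ⟨e, hlow⟩ (hup _ hl))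
    (le_csInf ⟨e + 1, hup _ (lt_add_one e)⟩ hlow)

theorem lojasiewiczIneq_of_forall_ne_zero (hcont : ContinuousAt F 0) (hF0 : F 0 = 0)
    {c e l : ℝ} (hc : 0 < c) (he : 0 ≤ e) (hel : e < l)
    (hbound : ∀ z ≠ 0, c * ‖F z‖ ^ e ≤ ‖fderiv 𝕜 F z‖) : LojasiewiczIneq F l := by
  have hl : 0 < l := he.trans_lt hel
  obtain ⟨ε, hε, hsmall⟩ := Metric.eventually_nhds_iff.1
    (hcont.norm.eventually_le_const (by simp [hF0] : ‖F 0‖ < 1))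
  refine ⟨hl, c, hc, ε, hε, fun z hz => ?_⟩
  rcases eq_or_ne z 0 with rfl | hz0
  · simp [hF0, Real.zero_rpow hl.ne']
  · calc c * ‖F z‖ ^ l ≤ c * ‖F z‖ ^ e :=
          mul_le_mul_of_nonneg_left (Real.rpow_le_rpow_of_exponent_ge' (norm_nonneg _)
            (hsmall (by simpa using hz)) he hel.le) hc.le
      _ ≤ ‖fderiv 𝕜 F z‖ := hbound z hz0

theorem IsHomogeneousFun.le_of_lojasiewiczIneq (hF : IsHomogeneousFun F d)
    (hdiff : Differentiable 𝕜 F) (hd : 1 ≤ d) {x : E} (hx : F x ≠ 0) {l : ℝ}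
    (hl : LojasiewiczIneq F l) : 1 - 1 / (d : ℝ) ≤ l := by
  obtain ⟨-, c, hc, ε, hε, hineq⟩ := hl
  by_contra! hlt
  have hd0 : (0 : ℝ) < d := by exact_mod_cast hd
  set γ : ℝ := d - 1 - d * l
  have hγ : 0 < γ := by
    have := mul_lt_mul_of_pos_left hlt hd0
    rw [mul_sub, mul_one, mul_one_div_cancel hd0.ne'] at this
    linarith
  have hsmall : ∀ᶠ τ : ℝ in 𝓝[>] 0, ‖(τ : 𝕜) • x‖ < ε := by
    have hcont : Continuous fun τ : ℝ => ‖(τ : 𝕜) • x‖ := by fun_prop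
    exact nhdsWithin_le_nhds ((hcont.tendsto 0).eventually_lt_const (by simpa using hε))
  have hbound : ∀ᶠ τ : ℝ in 𝓝[>] 0, c * ‖F x‖ ^ l ≤ τ ^ γ * ‖fderiv 𝕜 F x‖ := by
    filter_upwards [hsmall, self_mem_nhdsWithin] with τ hτε (hτ : 0 < τ)
    have h := hineq _ hτε
    rw [hF, hF.norm_fderiv_smul hd (hdiff x) (by exact_mod_cast hτ.ne'), norm_mul, norm_pow,
      RCLike.norm_ofReal, abs_of_pos hτ, Real.mul_rpow (by positivity) (norm_nonneg _),
      ← Real.rpow_natCast, ← Real.rpow_natCast, ← Real.rpow_mul hτ.le,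
      show (((d - 1 : ℕ) : ℝ)) = γ + d * l by push_cast [Nat.cast_sub hd]; ring,
      Real.rpow_add hτ] at h
    have hτl : 0 < τ ^ ((d : ℝ) * l) := Real.rpow_pos_of_pos hτ _
    nlinarith
  have hlim : Tendsto (fun τ : ℝ => τ ^ γ * ‖fderiv 𝕜 F x‖) (𝓝[>] 0) (𝓝 0) := by
    have h := (Real.continuousAt_rpow_const 0 γ (Or.inr hγ.le)).tendsto.mul_const
      ‖fderiv 𝕜 F x‖
    rw [Real.zero_rpow hγ.ne', zero_mul] at h
    exact h.mono_left nhdsWithin_le_nhds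
  have hpos : 0 < c * ‖F x‖ ^ l := by
    have := norm_pos_iff.2 hx
    positivity
  exact (ge_of_tendsto hlim hbound).not_gt hpos

end RCLike

namespace MvPolynomial

variable {𝕜 ι : Type*} [RCLike 𝕜] [Fintype ι] {d : ℕ}

theorem IsHomogeneous.isHomogeneousFun_eval {f : MvPolynomial ι 𝕜} (hf : f.IsHomogeneous d) :
    IsHomogeneousFun (fun z : EuclideanSpace 𝕜 ι => eval (fun i => z i) f) d :=
  fun s z => hf.eval_smul s fun i => z i

theorem differentiable_eval_euclidean (f : MvPolynomial ι 𝕜) :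
    Differentiable 𝕜 (fun z : EuclideanSpace 𝕜 ι => eval (fun i => z i) f) := fun z =>
  (AnalyticOnNhd.eval_continuousLinearMap
    (EuclideanSpace.equiv ι 𝕜 : EuclideanSpace 𝕜 ι →L[𝕜] ι → 𝕜) f z trivial).differentiableAt

theorem IsHomogeneous.exists_pos_mul_rpow_le_norm_fderiv_of_norm_le {f : MvPolynomial (Fin 2) 𝕜}
    (hf : f.IsHomogeneous d) (hf0 : f ≠ 0) (hd : 1 ≤ d) {j k : Fin 2} (hjk : j ≠ k) :
    ∃ c > 0, ∀ z : EuclideanSpace 𝕜 (Fin 2), z j ≠ 0 → ‖z k‖ ≤ ‖z j‖ →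
      c * ‖eval (fun i => z i) f‖ ^ (1 - 1 / (d : ℝ)) ≤
        ‖fderiv 𝕜 (fun z : EuclideanSpace 𝕜 (Fin 2) => eval (fun i => z i) f) z‖ := by
  obtain ⟨c, hc, hcone⟩ := hf.isHomogeneousFun_eval.exists_pos_mul_rpow_le_norm_fderiv_smul
    f.differentiable_eval_euclidean hd (hf.restrictLine_ne_zero hf0 hjk)
    ((natDegree_restrictLine_le _ _ _).trans hf.totalDegree_le)
    (a := EuclideanSpace.single j 1) (b := EuclideanSpace.single k 1) (eval_restrictLine _ _ _)
  refine ⟨c, hc, fun z hz hzk => ?_⟩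
  have hz' : z = z j • (EuclideanSpace.single j 1 + (z k / z j) • EuclideanSpace.single k 1) :=
    congrArg (WithLp.toLp 2) (fin_two_eq_smul_single_add_smul_single (fun i => z i) hjk hz)
  have := hcone (z j) (z k / z j) hz (by rw [norm_div]; exact div_le_one_of_le₀ hzk (norm_nonneg _))
  rwa [← hz'] at this

theorem IsHomogeneous.exists_pos_mul_rpow_le_norm_fderiv {f : MvPolynomial (Fin 2) 𝕜}
    (hf : f.IsHomogeneous d) (hf0 : f ≠ 0) (hd : 1 ≤ d) :
    ∃ c > 0, ∀ z : EuclideanSpace 𝕜 (Fin 2), z ≠ 0 →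
      c * ‖eval (fun i => z i) f‖ ^ (1 - 1 / (d : ℝ)) ≤
        ‖fderiv 𝕜 (fun z : EuclideanSpace 𝕜 (Fin 2) => eval (fun i => z i) f) z‖ := by
  obtain ⟨c₀, hc₀, h₀⟩ := hf.exists_pos_mul_rpow_le_norm_fderiv_of_norm_le hf0 hd zero_ne_one
  obtain ⟨c₁, hc₁, h₁⟩ := hf.exists_pos_mul_rpow_le_norm_fderiv_of_norm_le hf0 hd one_ne_zero
  refine ⟨min c₀ c₁, lt_min hc₀ hc₁, fun z hz => ?_⟩
  have hne {j k : Fin 2} (hjk : j ≠ k) (h : ‖z k‖ ≤ ‖z j‖) : z j ≠ 0 := fun hj => hz <| by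
    have hk : z k = 0 := norm_le_zero_iff.1 (by simpa [hj] using h)
    ext i
    obtain rfl | rfl : i = j ∨ i = k := by omega
    · simp [hj]
    · simp [hk]
  rcases le_total ‖z 1‖ ‖z 0‖ with h | h
  · exact (mul_le_mul_of_nonneg_right (min_le_left _ _) (by positivity)).trans
      (h₀ z (hne zero_ne_one h) h)
  · exact (mul_le_mul_of_nonneg_right (min_le_right _ _) (by positivity)).trans
      (h₁ z (hne one_ne_zero h) h)

end MvPolynomial

/-- a nonzero complex homogeneous polynomial of degree `d ≥ 1` in two
variables has Łojasiewicz gradient exponent `1 - 1/d` at the origin. -/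
theorem stmt10 (d : ℕ) (hd : 1 ≤ d) (f : MvPolynomial (Fin 2) ℂ) (hf : f ≠ 0)
    (hhom : f.IsHomogeneous d) :
    LGE (fun z : EuclideanSpace ℂ (Fin 2) => MvPolynomial.eval (fun i => z i) f) =
      1 - 1 / (d : ℝ) := by
  have hF := hhom.isHomogeneousFun_eval
  have hdiff := f.differentiable_eval_euclidean
  obtain ⟨c, hc, hbound⟩ := hhom.exists_pos_mul_rpow_le_norm_fderiv hf hd
  obtain ⟨x, hx⟩ : ∃ x : Fin 2 → ℂ, MvPolynomial.eval x f ≠ 0 := by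
    by_contra! h
    exact hf (MvPolynomial.funext fun x => by simp [h x])
  have he : (0 : ℝ) ≤ 1 - 1 / (d : ℝ) :=
    sub_nonneg.2 ((div_le_one (by positivity)).2 (by exact_mod_cast hd))
  exact LGE_eq_of_forall
    (fun l hl => lojasiewiczIneq_of_forall_ne_zero hdiff.continuous.continuousAt
      (hF.map_zero hd) hc he hl hbound)
    fun l hl => hF.le_of_lojasiewiczIneq hdiff hd (x := WithLp.toLp 2 x) hx hl
end

section
/- Let f(x,y) = x³ + 3xy³ as a real analytic germ at 0 ∈ ℝ². Then ℒ₊(f) = 2/3, ℒ₋(f) := ℒ₊(f(x,-y)) = 7/9, and the Łojasiewicz gradient exponent of f at the origin is ℒ(f) = 7/9. -/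
/-- `ℓ(φ) = l` for an arc `φ`: `‖∇f(φ(t))‖ ≍ |f(φ(t))|^l` as `t → 0`. -/
def arcExp (f : ℝ × ℝ → ℝ) (φ : ℝ → ℝ × ℝ) (l : ℝ) : Prop :=
  ∃ c₁ c₂ ε : ℝ, 0 < c₁ ∧ 0 < c₂ ∧ 0 < ε ∧ ∀ t : ℝ, 0 < |t| → |t| < ε →
    c₁ * |f (φ t)| ^ l ≤ ‖fderiv ℝ f (φ t)‖ ∧ ‖fderiv ℝ f (φ t)‖ ≤ c₂ * |f (φ t)| ^ l

/-!
On `ℝ × ℝ` with the sup norm, `‖fderiv ℝ f (x, y)‖ = 3|x² + y³| + 9|x||y|²`, and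
`f = x (x² + y³) + 2xy³`. If `|y|³ ≤ 2|x² + y³|` then `x² ≤ 3|x² + y³|`, whence
`|f|⁷ ≲ |x² + y³|⁹`; otherwise we are near the polar curve, `|y|³ < 2x²`, and
`|f|⁷ ≲ |x|⁷|y|²¹ ≲ (|x||y|²)⁹`. Hence `|f|^{7/9} ≲ ‖∇f‖` near `0`. Conversely, along the
polar arc `(t³, -t²)` one has `f = -2t⁹` and `‖∇f‖ = 9|t|⁷`, so no smaller exponent works.
-/

open Filter Topology ContinuousLinearMap

lemma norm_smul_fst_add_smul_snd (a b : ℝ) :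
    ‖a • fst ℝ ℝ ℝ + b • snd ℝ ℝ ℝ‖ = |a| + |b| := by
  set L := a • fst ℝ ℝ ℝ + b • snd ℝ ℝ ℝ
  apply le_antisymm
  · refine opNorm_le_bound _ (by positivity) fun v => ?_
    have h₁ : |v.1| ≤ ‖v‖ := norm_fst_le v
    have h₂ : |v.2| ≤ ‖v‖ := norm_snd_le v
    calc |a * v.1 + b * v.2| ≤ |a| * |v.1| + |b| * |v.2| :=
          (abs_add_le _ _).trans_eq (by simp [abs_mul])
      _ ≤ (|a| + |b|) * ‖v‖ := by nlinarith [abs_nonneg a, abs_nonneg b]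
  · set v : ℝ × ℝ := ((SignType.sign a : ℝ), (SignType.sign b : ℝ))
    have hv : ‖v‖ ≤ 1 := by
      simp only [v, Prod.norm_def, Real.norm_eq_abs, max_le_iff]
      constructor
      · cases SignType.sign a <;> simp
      · cases SignType.sign b <;> simp
    calc |a| + |b| = L v := by simp [L, v, self_mul_sign]
      _ ≤ ‖L‖ * ‖v‖ := (le_abs_self _).trans (L.le_opNorm v)
      _ ≤ ‖L‖ := mul_le_of_le_one_right (norm_nonneg _) hv

lemma rpow_div_natCast_le_of_pow_le {u v C : ℝ} {p q : ℕ} (hq : q ≠ 0) (hu : 0 ≤ u)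
    (hv : 0 ≤ v) (hC : 0 < C) (h : u ^ p ≤ C * v ^ q) :
    C⁻¹ ^ (q⁻¹ : ℝ) * u ^ ((p : ℝ) / q) ≤ v := by
  refine le_of_pow_le_pow_left₀ hq hv ?_
  have hu' : (u ^ ((p : ℝ) / q)) ^ q = u ^ p := by
    rw [← Real.rpow_natCast, ← Real.rpow_mul hu, div_mul_cancel₀ _ (Nat.cast_ne_zero.2 hq),
      Real.rpow_natCast]
  rwa [mul_pow, Real.rpow_inv_natCast_pow (inv_nonneg.2 hC.le) hq, hu', inv_mul_le_iff₀ hC]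

lemma arcExp_of_abs_eq_mul_pow {f : ℝ × ℝ → ℝ} {φ : ℝ → ℝ × ℝ} {a k₁ k₂ ε : ℝ} {m n : ℕ}
    (hn : n ≠ 0) (ha : 0 < a) (hk₁ : 0 < k₁) (hk₂ : 0 < k₂) (hε : 0 < ε)
    (hfφ : ∀ t, |f (φ t)| = a * |t| ^ n)
    (hgrad : ∀ t, |t| < ε →
      k₁ * |t| ^ m ≤ ‖fderiv ℝ f (φ t)‖ ∧ ‖fderiv ℝ f (φ t)‖ ≤ k₂ * |t| ^ m) :
    arcExp f φ ((m : ℝ) / n) := by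
  set s := a ^ ((m : ℝ) / n)
  have hs : 0 < s := by positivity
  have hpow : ∀ t, |f (φ t)| ^ ((m : ℝ) / n) = s * |t| ^ m := fun t => by
    rw [hfφ, Real.mul_rpow ha.le (by positivity), ← Real.rpow_natCast |t| n,
      ← Real.rpow_mul (abs_nonneg t), mul_div_cancel₀ _ (Nat.cast_ne_zero.2 hn),
      Real.rpow_natCast]
  refine ⟨k₁ / s, k₂ / s, ε, by positivity, by positivity, hε, fun t _ htε => ?_⟩
  have hcancel : ∀ k : ℝ, k / s * (s * |t| ^ m) = k * |t| ^ m := fun k => by field_simp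
  rw [hpow, hcancel, hcancel]
  exact hgrad t htε

lemma le_of_arcExp {f : ℝ × ℝ → ℝ} {φ : ℝ → ℝ × ℝ} {l₀ l c ε : ℝ} (harc : arcExp f φ l₀)
    (hφ : Tendsto φ (𝓝[≠] 0) (𝓝 0)) (hfφ : Tendsto (fun t => f (φ t)) (𝓝[≠] 0) (𝓝[≠] 0))
    (hc : 0 < c) (hε : 0 < ε) (H : ∀ z : ℝ × ℝ, ‖z‖ < ε → c * ‖f z‖ ^ l ≤ ‖fderiv ℝ f z‖) :
    l₀ ≤ l := by
  by_contra! hl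
  obtain ⟨c₁, c₂, ε', -, -, hε', harc⟩ := harc
  have hev : ∀ᶠ t in 𝓝[≠] 0, c ≤ c₂ * |f (φ t)| ^ (l₀ - l) := by
    filter_upwards [hφ (Metric.ball_mem_nhds 0 hε), self_mem_nhdsWithin,
      nhdsWithin_le_nhds (Metric.ball_mem_nhds 0 hε'), hfφ self_mem_nhdsWithin]
      with t hφt ht htε hft
    have hpos : 0 < |f (φ t)| ^ l := Real.rpow_pos_of_pos (abs_pos.2 hft) l
    have := (H _ (by simpa using hφt)).trans (harc t (abs_pos.2 ht) (by simpa using htε)).2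
    rw [Real.norm_eq_abs, ← sub_add_cancel l₀ l, Real.rpow_add (abs_pos.2 hft), ← mul_assoc]
      at this
    exact le_of_mul_le_mul_right this hpos
  have hlim : Tendsto (fun t => c₂ * |f (φ t)| ^ (l₀ - l)) (𝓝[≠] 0) (𝓝 0) := by
    have := ((tendsto_nhdsWithin_iff.1 hfφ).1.abs.rpow_const (Or.inr (sub_pos.2 hl).le)).const_mul
      c₂
    simpa [Real.zero_rpow (sub_pos.2 hl).ne'] using this
  exact (ge_of_tendsto hlim hev).not_gt hc

section Estimates

variable {a b A F : ℝ} (ha : 0 ≤ a) (hF : 0 ≤ F) (hFle : F ≤ a * (A + 2 * b ^ 3))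
include ha hF hFle

lemma pow_seven_le_of_le_two_mul (hA : 0 ≤ A) (ha1 : a ≤ 1) (hab : a ^ 2 ≤ A + b ^ 3)
    (h : b ^ 3 ≤ 2 * A) : F ^ 7 ≤ 100 * (3 * A) ^ 9 := by
  have hF5 : F ≤ 5 * a * A := by nlinarith
  have ha4 : a ^ 4 ≤ 9 * A ^ 2 := by
    have : a ^ 2 ≤ 3 * A := by linarith
    nlinarith [sq_nonneg a]
  have ha7 : a ^ 7 ≤ 9 * A ^ 2 := by
    calc a ^ 7 = a ^ 3 * a ^ 4 := by ring
      _ ≤ 1 * (9 * A ^ 2) := by gcongr; exact pow_le_one₀ ha ha1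
      _ = 9 * A ^ 2 := one_mul _
  calc F ^ 7 ≤ (5 * a * A) ^ 7 := by gcongr
    _ = 5 ^ 7 * a ^ 7 * A ^ 7 := by ring
    _ ≤ 5 ^ 7 * (9 * A ^ 2) * A ^ 7 := by gcongr
    _ ≤ 100 * (3 * A) ^ 9 := by nlinarith [pow_nonneg hA 9]

lemma pow_seven_le_of_two_mul_lt (hb : 0 ≤ b) (hba : b ^ 3 ≤ A + a ^ 2) (h : 2 * A < b ^ 3) :
    F ^ 7 ≤ 100 * (9 * a * b ^ 2) ^ 9 := by
  have hb3 : b ^ 3 ≤ 2 * a ^ 2 := by linarith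
  have hF5 : F ≤ 5 / 2 * a * b ^ 3 := by nlinarith
  calc F ^ 7 ≤ (5 / 2 * a * b ^ 3) ^ 7 := by gcongr
    _ = (5 / 2) ^ 7 * (a ^ 7 * b ^ 18) * b ^ 3 := by ring
    _ ≤ (5 / 2) ^ 7 * (a ^ 7 * b ^ 18) * (2 * a ^ 2) := by gcongr
    _ ≤ 100 * (9 * a * b ^ 2) ^ 9 := by
      nlinarith [mul_nonneg (pow_nonneg ha 9) (pow_nonneg hb 18)]

end Estimates

lemma abs_cubic_pow_seven_le {x y : ℝ} (hx : |x| ≤ 1) :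
    |x ^ 3 + 3 * x * y ^ 3| ^ 7 ≤ 100 * (|3 * x ^ 2 + 3 * y ^ 3| + |9 * x * y ^ 2|) ^ 9 := by
  have hfx : |3 * x ^ 2 + 3 * y ^ 3| = 3 * |x ^ 2 + y ^ 3| := by
    rw [← abs_of_pos (three_pos (α := ℝ)), ← abs_mul]; ring_nf
  have hfy : |9 * x * y ^ 2| = 9 * |x| * |y| ^ 2 := by simp [abs_mul]
  have hF : |x ^ 3 + 3 * x * y ^ 3| ≤ |x| * (|x ^ 2 + y ^ 3| + 2 * |y| ^ 3) := by
    calc |x ^ 3 + 3 * x * y ^ 3| = |x| * |(x ^ 2 + y ^ 3) + 2 * y ^ 3| := by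
          rw [← abs_mul]; ring_nf
      _ ≤ |x| * (|x ^ 2 + y ^ 3| + 2 * |y| ^ 3) := by
          gcongr; exact (abs_add_le _ _).trans_eq (by simp [abs_mul])
  have hxy : |x| ^ 2 ≤ |x ^ 2 + y ^ 3| + |y| ^ 3 := by
    have := abs_sub (x ^ 2 + y ^ 3) (y ^ 3)
    rwa [add_sub_cancel_right, abs_pow, abs_pow] at this
  have hyx : |y| ^ 3 ≤ |x ^ 2 + y ^ 3| + |x| ^ 2 := by
    have := abs_sub (x ^ 2 + y ^ 3) (x ^ 2)
    rwa [add_sub_cancel_left, abs_pow, abs_pow] at this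
  rw [hfx, hfy]
  rcases le_or_gt (|y| ^ 3) (2 * |x ^ 2 + y ^ 3|) with h | h
  · refine (pow_seven_le_of_le_two_mul (abs_nonneg _) (abs_nonneg _) hF (abs_nonneg _) hx hxy
      h).trans ?_
    gcongr; exact le_add_of_nonneg_right (by positivity)
  · refine (pow_seven_le_of_two_mul_lt (abs_nonneg _) (abs_nonneg _) hF (abs_nonneg _) hyx
      h).trans ?_
    gcongr; exact le_add_of_nonneg_left (by positivity)

lemma hasFDerivAt_cubic (x y : ℝ) :
    HasFDerivAt (fun p : ℝ × ℝ => p.1 ^ 3 + 3 * p.1 * p.2 ^ 3)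
      ((3 * x ^ 2 + 3 * y ^ 3) • fst ℝ ℝ ℝ + (9 * x * y ^ 2) • snd ℝ ℝ ℝ) (x, y) := by
  have hx : HasFDerivAt (fun p : ℝ × ℝ => p.1) (fst ℝ ℝ ℝ) (x, y) := hasFDerivAt_fst
  have hy : HasFDerivAt (fun p : ℝ × ℝ => p.2) (snd ℝ ℝ ℝ) (x, y) := hasFDerivAt_snd
  refine ((hx.pow 3).add ((hx.const_mul 3).mul (hy.pow 3))).congr_fderiv ?_
  ext <;> simp <;> ring

section Cubic

variable {f : ℝ × ℝ → ℝ} (hf : ∀ p : ℝ × ℝ, f p = p.1 ^ 3 + 3 * p.1 * p.2 ^ 3)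
include hf

lemma norm_fderiv_cubic (x y : ℝ) :
    ‖fderiv ℝ f (x, y)‖ = |3 * x ^ 2 + 3 * y ^ 3| + |9 * x * y ^ 2| := by
  rw [show f = _ from funext hf, (hasFDerivAt_cubic x y).fderiv, norm_smul_fst_add_smul_snd]

lemma cubic_lojasiewicz {z : ℝ × ℝ} (hz : ‖z‖ < 1) :
    (100 : ℝ)⁻¹ ^ (9⁻¹ : ℝ) * ‖f z‖ ^ (7 / 9 : ℝ) ≤ ‖fderiv ℝ f z‖ := by
  obtain ⟨x, y⟩ := z
  have hx : |x| ≤ 1 := (norm_fst_le (x, y)).trans hz.le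
  have h := abs_cubic_pow_seven_le (y := y) hx
  rw [← hf (x, y), ← Real.norm_eq_abs, ← norm_fderiv_cubic hf] at h
  exact_mod_cast rpow_div_natCast_le_of_pow_le (by norm_num) (norm_nonneg _) (norm_nonneg _)
    (by norm_num) h

lemma cubic_arcExp_generic {g : ℝ} (hg : g ≠ 0) :
    arcExp f (fun t => (g * t ^ 3, t ^ 2)) (2 / 3) := by
  have hcoeff : 0 < |g ^ 3 + 3 * g| := by
    rw [abs_pos, show g ^ 3 + 3 * g = g * (g ^ 2 + 3) by ring]
    positivity
  have hf_arc : ∀ t : ℝ, |f (g * t ^ 3, t ^ 2)| = |g ^ 3 + 3 * g| * |t| ^ 9 := fun t => by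
    rw [hf, ← abs_pow, ← abs_mul]; ring_nf
  have hgrad : ∀ t : ℝ, ‖fderiv ℝ f (g * t ^ 3, t ^ 2)‖
      = 3 * (g ^ 2 + 1) * |t| ^ 6 + 9 * |g| * |t| ^ 7 := fun t => by
    rw [norm_fderiv_cubic hf,
      show 3 * (g * t ^ 3) ^ 2 + 3 * (t ^ 2) ^ 3 = 3 * (g ^ 2 + 1) * t ^ 6 by ring,
      show 9 * (g * t ^ 3) * (t ^ 2) ^ 2 = 9 * g * t ^ 7 by ring]
    simp only [abs_mul, abs_pow, abs_of_pos (by positivity : (0 : ℝ) < g ^ 2 + 1)]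
    norm_num
  have := arcExp_of_abs_eq_mul_pow (m := 6) (n := 9) (k₁ := 3 * (g ^ 2 + 1))
    (k₂ := 3 * (g ^ 2 + 1) + 9 * |g|) (by norm_num) hcoeff (by positivity) (by positivity)
    one_pos hf_arc fun t ht => by
      have h76 : |t| ^ 7 ≤ |t| ^ 6 := pow_le_pow_of_le_one (abs_nonneg t) ht.le (by norm_num)
      rw [hgrad]
      constructor <;> nlinarith [abs_nonneg g, pow_nonneg (abs_nonneg t) 7]
  convert this using 1; norm_num

lemma cubic_arcExp_polar : arcExp f (fun t => (t ^ 3, -t ^ 2)) (7 / 9) := by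
  have hf_arc : ∀ t : ℝ, |f (t ^ 3, -t ^ 2)| = 2 * |t| ^ 9 := fun t => by
    rw [hf, ← abs_pow, ← abs_two, ← abs_mul, ← abs_neg]; ring_nf
  have hgrad : ∀ t : ℝ, ‖fderiv ℝ f (t ^ 3, -t ^ 2)‖ = 9 * |t| ^ 7 := fun t => by
    rw [norm_fderiv_cubic hf, show 3 * (t ^ 3) ^ 2 + 3 * (-t ^ 2) ^ 3 = 0 by ring,
      show 9 * t ^ 3 * (-t ^ 2) ^ 2 = 9 * t ^ 7 by ring]
    simp [abs_mul]
  have := arcExp_of_abs_eq_mul_pow (m := 7) (n := 9) (k₁ := 9) (k₂ := 9) (by norm_num) two_pos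
    (by norm_num) (by norm_num) one_pos hf_arc fun t _ => by rw [hgrad]; exact ⟨le_rfl, le_rfl⟩
  convert this using 1; norm_num

lemma seven_div_nine_le_of_lojasiewicz {l c ε : ℝ} (hc : 0 < c) (hε : 0 < ε)
    (H : ∀ z : ℝ × ℝ, ‖z‖ < ε → c * ‖f z‖ ^ l ≤ ‖fderiv ℝ f z‖) : 7 / 9 ≤ l := by
  have hφ : Tendsto (fun t : ℝ => (t ^ 3, -t ^ 2)) (𝓝[≠] 0) (𝓝 0) := by
    refine tendsto_nhdsWithin_of_tendsto_nhds ?_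
    simpa [← Prod.zero_eq_mk] using
      ((continuous_pow 3).prodMk (continuous_pow 2).neg).tendsto (0 : ℝ)
  have hfφ : Tendsto (fun t : ℝ => f (t ^ 3, -t ^ 2)) (𝓝[≠] 0) (𝓝[≠] 0) := by
    have hval : ∀ t : ℝ, f (t ^ 3, -t ^ 2) = -2 * t ^ 9 := fun t => by rw [hf]; ring
    simp only [hval]
    refine tendsto_nhdsWithin_of_tendsto_nhds_of_eventually_within _ ?_ ?_
    · simpa using ((continuous_pow 9).const_mul (-2 : ℝ)).tendsto (0 : ℝ)
        |>.mono_left nhdsWithin_le_nhds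
    · filter_upwards [self_mem_nhdsWithin] with t ht
      simpa using ht
  exact le_of_arcExp (cubic_arcExp_polar hf) hφ hfφ hc hε H

end Cubic

/-- for `f(x,y) = x³ + 3xy³` (mini-regular in `x` of order `3`), the real polar
branch for `y > 0` is `x = g·y^{3/2}` (`g` generic, parametrized `t ↦ (g t³, t²)`) with
exponent `2/3`, so `ℒ₊(f) = max{2/3, 2/3} = 2/3`; for `y < 0` (i.e. for `f(x,-y)`) the real
polar branch `x = y^{3/2}` (arc `t ↦ (t³, -t²)`) has exponent `7/9`, so `ℒ₋(f) = 7/9`; and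
`ℒ(f) = max{ℒ₊(f), ℒ₋(f)} = 7/9`. -/
theorem stmt15 (f : ℝ × ℝ → ℝ)
    (hf : ∀ p : ℝ × ℝ, f p = p.1 ^ 3 + 3 * p.1 * p.2 ^ 3) :
    (∀ g : ℝ, g ≠ 0 → arcExp f (fun t => (g * t ^ 3, t ^ 2)) (2 / 3)) ∧
    arcExp f (fun t => (t ^ 3, -t ^ 2)) (7 / 9) ∧
    max ((2 : ℝ) / 3) (7 / 9) = 7 / 9 ∧
    LGE f = 7 / 9 := by
  refine ⟨fun g hg => cubic_arcExp_generic hf hg, cubic_arcExp_polar hf, by norm_num, ?_⟩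
  refine IsLeast.csInf_eq ⟨⟨by norm_num, _, by positivity, 1, one_pos,
    fun z hz => cubic_lojasiewicz hf hz⟩, ?_⟩
  rintro l ⟨-, c, hc, ε, hε, H⟩
  exact seven_div_nine_le_of_lojasiewicz hf hc hε H
end

section
/- The real analytic germs f(x,y) = x² - y³ and g(x,y) = x² - y⁵ on ℝ² are topologically right equivalent at the origin, yet their Łojasiewicz gradient exponents differ: ℒ(f) = 2/3 and ℒ(g) = 4/5. Hence the Łojasiewicz gradient exponent of real analytic germs in two variables is not a topological invariant. -/
/-! Odd powers are homeomorphisms of `ℝ`, so `(x, y) ↦ (x, (y³)^{1/5})` carries `x² - y³` to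
`x² - y⁵`. For `f = x² - yⁿ`, the dual of the sup norm on `ℝ × ℝ` is the `ℓ¹` norm, so
`‖df(x, y)‖ = 2|x| + n|y|^{n-1}`. Subadditivity of `t ↦ t^ℓ` (`ℓ ≤ 1`) gives
`|f|^{(n-1)/n} ≤ |x| + |y|^{n-1} ≤ ‖df‖` near `0`; along the `y`-axis `|f|^L = y^{nL}` against
`‖df‖ = n y^{n-1}`, which forces `nL ≥ n - 1`. -/

open Filter Topology

lemma Odd.pow_left_surjective {n : ℕ} (hn : Odd n) : Function.Surjective fun x : ℝ => x ^ n := by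
  intro y
  rcases le_total 0 y with hy | hy
  · exact ⟨y ^ (n⁻¹ : ℝ), Real.rpow_inv_natCast_pow hy hn.pos.ne'⟩
  · refine ⟨-(-y) ^ (n⁻¹ : ℝ), ?_⟩
    show (-(-y) ^ (n⁻¹ : ℝ)) ^ n = y
    rw [hn.neg_pow, Real.rpow_inv_natCast_pow (neg_nonneg.2 hy) hn.pos.ne', neg_neg]

noncomputable def oddPowHomeomorph {n : ℕ} (hn : Odd n) : ℝ ≃ₜ ℝ :=
  (hn.strictMono_pow.orderIsoOfSurjective _ hn.pow_left_surjective).toHomeomorph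

@[simp]
lemma oddPowHomeomorph_apply {n : ℕ} (hn : Odd n) (x : ℝ) : oddPowHomeomorph hn x = x ^ n := rfl

lemma exists_homeomorph_sq_sub_pow_eq {m n : ℕ} (hm : Odd m) (hn : Odd n) :
    ∃ h : (ℝ × ℝ) ≃ₜ (ℝ × ℝ), h 0 = 0 ∧
      ∀ p : ℝ × ℝ, p.1 ^ 2 - p.2 ^ m = (h p).1 ^ 2 - (h p).2 ^ n := by
  have hpow : ∀ t, ((oddPowHomeomorph hn).symm t) ^ n = t :=
    (oddPowHomeomorph hn).apply_symm_apply
  refine ⟨(Homeomorph.refl ℝ).prodCongr ((oddPowHomeomorph hm).trans (oddPowHomeomorph hn).symm),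
    ?_, fun p => ?_⟩
  · refine Prod.ext rfl ((oddPowHomeomorph hn).symm_apply_eq.2 ?_)
    simp [hm.pos.ne', hn.pos.ne']
  · simp [hpow]

lemma ContinuousLinearMap.norm_eq_abs_add_abs (L : ℝ × ℝ →L[ℝ] ℝ) :
    ‖L‖ = |L (1, 0)| + |L (0, 1)| := by
  have hL : ∀ u : ℝ × ℝ, L u = u.1 * L (1, 0) + u.2 * L (0, 1) := fun u => by
    conv_lhs => rw [show u = u.1 • ((1 : ℝ), (0 : ℝ)) + u.2 • ((0 : ℝ), (1 : ℝ)) by ext <;> simp]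
    rw [map_add, map_smul, map_smul, smul_eq_mul, smul_eq_mul]
  refine le_antisymm (L.opNorm_le_bound (by positivity) fun u => ?_) ?_
  · rw [hL, Real.norm_eq_abs]
    calc |u.1 * L (1, 0) + u.2 * L (0, 1)| ≤ ‖u.1‖ * |L (1, 0)| + ‖u.2‖ * |L (0, 1)| := by
          simpa only [abs_mul, Real.norm_eq_abs] using
            abs_add_le (u.1 * L (1, 0)) (u.2 * L (0, 1))
      _ ≤ (|L (1, 0)| + |L (0, 1)|) * ‖u‖ := by
          nlinarith [_root_.norm_fst_le u, _root_.norm_snd_le u, abs_nonneg (L (1, 0)),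
            abs_nonneg (L (0, 1))]
  · -- `(sign a, sign b)` is a corner of the unit ball of the sup norm
    set v : ℝ × ℝ := (SignType.sign (L (1, 0)), SignType.sign (L (0, 1)))
    have hsign : ∀ s : SignType, |(s : ℝ)| ≤ 1 := by rintro (_ | _ | _) <;> simp
    have hv : ‖v‖ ≤ 1 := max_le (hsign _) (hsign _)
    calc |L (1, 0)| + |L (0, 1)| = L v := by
          rw [hL v, sign_mul_self, sign_mul_self]
      _ ≤ ‖L v‖ := Real.le_norm_self _
      _ ≤ ‖L‖ * ‖v‖ := L.le_opNorm v
      _ ≤ ‖L‖ := mul_le_of_le_one_right (norm_nonneg L) hv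

section Lojasiewicz

variable {𝕜 : Type*} [RCLike 𝕜] {E : Type*} [NormedAddCommGroup E] [NormedSpace 𝕜 E]

def IsLojasiewiczExponent (f : E → 𝕜) (l : ℝ) : Prop :=
  0 < l ∧ ∃ c > (0:ℝ), ∃ ε > (0:ℝ), ∀ z : E, ‖z‖ < ε → c * ‖f z‖ ^ l ≤ ‖fderiv 𝕜 f z‖

lemma LGE_eq_of_isLeast {f : E → 𝕜} {l : ℝ} (h : IsLeast {l | IsLojasiewiczExponent f l} l) :
    LGE f = l :=
  h.csInf_eq

end Lojasiewicz

lemma le_of_eventually_mul_rpow_le {a b c K : ℝ} (hc : 0 < c)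
    (h : ∀ᶠ y in 𝓝[>] 0, c * y ^ a ≤ K * y ^ b) : b ≤ a := by
  by_contra! hab
  have hlim : Tendsto (fun y : ℝ => K * y ^ (b - a)) (𝓝[>] 0) (𝓝 0) := by
    have := (Real.continuousAt_rpow_const 0 (b - a) (.inr (sub_pos.2 hab).le)).tendsto
    rw [Real.zero_rpow (sub_pos.2 hab).ne'] at this
    simpa using (this.const_mul K).mono_left nhdsWithin_le_nhds
  obtain ⟨y, hy, hy0, hsmall⟩ :=
    (h.and (eventually_mem_nhdsWithin.and (hlim.eventually (gt_mem_nhds hc)))).exists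
  have hya : 0 < y ^ a := Real.rpow_pos_of_pos hy0 a
  have : K * y ^ b = K * y ^ (b - a) * y ^ a := by
    rw [mul_assoc, ← Real.rpow_add hy0, sub_add_cancel]
  nlinarith

section SqSubPow

variable (n : ℕ)

lemma hasFDerivAt_sq_sub_pow (z : ℝ × ℝ) :
    HasFDerivAt (fun p : ℝ × ℝ => p.1 ^ 2 - p.2 ^ n)
      ((2 * z.1) • ContinuousLinearMap.fst ℝ ℝ ℝ
        - (n * z.2 ^ (n - 1)) • ContinuousLinearMap.snd ℝ ℝ ℝ) z := by
  refine (((hasDerivAt_pow 2 z.1).comp_hasFDerivAt z hasFDerivAt_fst).sub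
    ((hasDerivAt_pow n z.2).comp_hasFDerivAt z hasFDerivAt_snd)).congr_fderiv ?_
  simp

lemma norm_fderiv_sq_sub_pow (z : ℝ × ℝ) :
    ‖fderiv ℝ (fun p : ℝ × ℝ => p.1 ^ 2 - p.2 ^ n) z‖ = 2 * |z.1| + n * |z.2| ^ (n - 1) := by
  rw [(hasFDerivAt_sq_sub_pow n z).fderiv, ContinuousLinearMap.norm_eq_abs_add_abs]
  simp [abs_mul]

lemma abs_sq_sub_pow_rpow_le (hn : 2 ≤ n) {x : ℝ} (hx : |x| ≤ 1) (y : ℝ) :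
    |x ^ 2 - y ^ n| ^ (((n : ℝ) - 1) / n) ≤ |x| + |y| ^ (n - 1) := by
  set l : ℝ := ((n : ℝ) - 1) / n
  have hn' : (2 : ℝ) ≤ n := by exact_mod_cast hn
  have hl0 : 0 ≤ l := div_nonneg (by linarith) (by linarith)
  have hl1 : l ≤ 1 := (div_le_one (by linarith)).2 (by linarith)
  have h2l : 1 ≤ 2 * l := by rw [← mul_div_assoc, le_div_iff₀ (by linarith)]; linarith
  have hx_term : (x ^ 2) ^ l ≤ |x| := by
    rw [← sq_abs, ← Real.rpow_natCast, ← Real.rpow_mul (abs_nonneg x), Nat.cast_ofNat]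
    simpa using Real.rpow_le_rpow_of_exponent_ge' (abs_nonneg x) hx zero_le_one h2l
  have hy_term : (|y| ^ n) ^ l = |y| ^ (n - 1) := by
    rw [← Real.rpow_natCast, ← Real.rpow_mul (abs_nonneg y), ← Real.rpow_natCast,
      Nat.cast_sub (by omega), Nat.cast_one, mul_div_cancel₀ _ (by positivity)]
  calc |x ^ 2 - y ^ n| ^ l ≤ (x ^ 2 + |y| ^ n) ^ l := by
        gcongr
        have := abs_sub (x ^ 2) (y ^ n)
        rwa [abs_of_nonneg (sq_nonneg x), abs_pow] at this
    _ ≤ (x ^ 2) ^ l + (|y| ^ n) ^ l :=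
        Real.rpow_add_le_add_rpow (sq_nonneg x) (by positivity) hl0 hl1
    _ ≤ |x| + |y| ^ (n - 1) := by rw [hy_term]; linarith

lemma isLojasiewiczExponent_sq_sub_pow (hn : 2 ≤ n) :
    IsLojasiewiczExponent (fun p : ℝ × ℝ => p.1 ^ 2 - p.2 ^ n) (((n : ℝ) - 1) / n) := by
  have hn' : (2 : ℝ) ≤ n := by exact_mod_cast hn
  refine ⟨div_pos (by linarith) (by linarith), 1, one_pos, 1, one_pos, fun z hz => ?_⟩
  have hx : |z.1| ≤ 1 := (_root_.norm_fst_le z).trans hz.le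
  rw [one_mul, Real.norm_eq_abs, norm_fderiv_sq_sub_pow]
  have := abs_sq_sub_pow_rpow_le n hn hx z.2
  nlinarith [abs_nonneg z.1, pow_nonneg (abs_nonneg z.2) (n - 1)]

lemma IsLojasiewiczExponent.le_of_sq_sub_pow (hn : 1 ≤ n) {L : ℝ}
    (hL : IsLojasiewiczExponent (fun p : ℝ × ℝ => p.1 ^ 2 - p.2 ^ n) L) :
    ((n : ℝ) - 1) / n ≤ L := by
  obtain ⟨-, c, hc, ε, hε, hineq⟩ := hL
  suffices (n : ℝ) - 1 ≤ n * L by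
    rwa [div_le_iff₀ (by exact_mod_cast hn), mul_comm]
  refine le_of_eventually_mul_rpow_le (K := n) hc ?_
  filter_upwards [Ioo_mem_nhdsGT hε] with y ⟨hy0, hyε⟩
  have := hineq (0, y) (by simpa [abs_of_pos hy0] using ⟨hε, hyε⟩)
  rw [norm_fderiv_sq_sub_pow] at this
  simp only [zero_pow two_ne_zero, zero_sub, norm_neg, Real.norm_eq_abs, abs_zero, mul_zero,
    zero_add, abs_pow, abs_of_pos hy0] at this
  rwa [← Real.rpow_natCast y n, ← Real.rpow_mul hy0.le, ← Real.rpow_natCast y (n - 1),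
    Nat.cast_sub hn, Nat.cast_one] at this

lemma LGE_sq_sub_pow (hn : 2 ≤ n) :
    LGE (fun p : ℝ × ℝ => p.1 ^ 2 - p.2 ^ n) = ((n : ℝ) - 1) / n :=
  LGE_eq_of_isLeast ⟨isLojasiewiczExponent_sq_sub_pow n hn,
    fun _ hL => hL.le_of_sq_sub_pow n (by omega)⟩

end SqSubPow

/-- `f(x,y) = x² - y³` and `g(x,y) = x² - y⁵` are topologically right
equivalent at `0` (indeed by a global homeomorphism fixing `0`), yet
`ℒ(f) = 2/3 ≠ 4/5 = ℒ(g)`; so the Łojasiewicz gradient exponent of real analytic germs in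
two variables is not a topological invariant. -/
theorem stmt16 :
    (∃ h : (ℝ × ℝ) ≃ₜ (ℝ × ℝ), h 0 = 0 ∧
      ∀ p : ℝ × ℝ, p.1 ^ 2 - p.2 ^ 3 = (h p).1 ^ 2 - (h p).2 ^ 5) ∧
    LGE (fun p : ℝ × ℝ => p.1 ^ 2 - p.2 ^ 3) = 2 / 3 ∧
    LGE (fun p : ℝ × ℝ => p.1 ^ 2 - p.2 ^ 5) = 4 / 5 ∧
    ((2 : ℝ) / 3 ≠ 4 / 5) := by
  refine ⟨exists_homeomorph_sq_sub_pow_eq (by decide) (by decide), ?_, ?_, by norm_num⟩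
  · rw [LGE_sq_sub_pow 3 (by norm_num)]
    norm_num
  · rw [LGE_sq_sub_pow 5 (by norm_num)]
    norm_num
end
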